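/- Let D₊, D₋, β₊, β₋ > 0, σ > 0, M > 0 be positive reals, and for each nonzero integer m and each τ ∈ [0,1] suppose Re λ_m = -μ_m - ν_m where μ_m := Δ·( tanh(D₊·m)/(β₊·D₊·m) + tanh(D₋·m)/(β₋·D₋·m) )⁻¹ with Δ ≥ σ, and |ν_m| ≤ M·|m|/cosh(min(D₊,D₋)·|m|). Then there exist a constant c > 0 and an integer m₀ ≥ 1 (depending only on D±, β±, σ, M) such that Re λ_m ≤ -c·|m| for all integers m with |m| ≥ m₀ and all τ ∈ [0,1]. -/

import Mathlib

/-!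
The Dirichlet–Neumann part grows linearly: since `0 < tanh y / y ≤ 1 / |y|`, the sum inside the
inverse is positive and at most `K / |m|` with `K = 1/(β₊D₊) + 1/(β₋D₋)`, so
`μ_m ≥ Δ |m| / K ≥ 2c |m|` for `c = σ / (2K)`. The correction satisfies
`|ν_m| ≤ (M / cosh (min D₊ D₋ · |m|)) · |m|`, and `M / cosh → 0`, so `|ν_m| ≤ c |m|` once `|m|` is
large. Hence `Re λ_m ≤ -2c|m| + c|m| = -c|m|`.
-/

open Real Filter Topology

lemma Real.tendsto_cosh_atTop : Tendsto cosh atTop atTop :=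
  tendsto_atTop_mono' atTop
    ((eventually_ge_atTop 0).mono fun _ hx => (self_le_sinh_iff.2 hx).trans (sinh_lt_cosh _).le)
    tendsto_id

lemma Real.tanh_div_self_pos {y : ℝ} (hy : y ≠ 0) : 0 < tanh y / y := by
  rw [tanh_eq_sinh_div_cosh, div_right_comm]
  refine div_pos ?_ (cosh_pos y)
  rcases hy.lt_or_gt with hy | hy
  · exact div_pos_of_neg_of_neg (sinh_neg_iff.2 hy) hy
  · exact div_pos (sinh_pos_iff.2 hy) hy

lemma Real.tanh_div_self_le_one_div_abs (y : ℝ) : tanh y / y ≤ 1 / |y| := by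
  calc tanh y / y ≤ |tanh y / y| := le_abs_self _
    _ = |tanh y| / |y| := abs_div _ _
    _ ≤ 1 / |y| := by gcongr; exact (abs_tanh_lt_one y).le

section DirichletNeumann

variable {D β x : ℝ}

lemma tanh_mul_div_pos (hD : 0 < D) (hβ : 0 < β) (hx : x ≠ 0) :
    0 < tanh (D * x) / (β * (D * x)) := by
  rw [div_mul_eq_div_div_swap]
  exact div_pos (tanh_div_self_pos (mul_ne_zero hD.ne' hx)) hβ

lemma tanh_mul_div_le (hD : 0 < D) (hβ : 0 < β) (x : ℝ) :
    tanh (D * x) / (β * (D * x)) ≤ 1 / (β * D) / |x| := by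
  calc tanh (D * x) / (β * (D * x)) = tanh (D * x) / (D * x) / β := div_mul_eq_div_div_swap ..
    _ ≤ 1 / |D * x| / β := by gcongr ?_ / _; exact tanh_div_self_le_one_div_abs _
    _ = 1 / (β * D) / |x| := by rw [abs_mul, abs_of_pos hD]; field_simp

lemma mul_abs_div_le_dirichletNeumann {Dp Dn βp βn Δ : ℝ} (hDp : 0 < Dp) (hDn : 0 < Dn)
    (hβp : 0 < βp) (hβn : 0 < βn) (hΔ : 0 ≤ Δ) (hx : x ≠ 0) :
    Δ * (|x| / (1 / (βp * Dp) + 1 / (βn * Dn))) ≤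
      Δ * (tanh (Dp * x) / (βp * (Dp * x)) + tanh (Dn * x) / (βn * (Dn * x)))⁻¹ := by
  have hsum_pos := add_pos (tanh_mul_div_pos hDp hβp hx) (tanh_mul_div_pos hDn hβn hx)
  have hsum_le := add_le_add (tanh_mul_div_le hDp hβp x) (tanh_mul_div_le hDn hβn x)
  rw [← add_div] at hsum_le
  gcongr
  simpa only [inv_div] using inv_anti₀ hsum_pos hsum_le

end DirichletNeumann

lemma tendsto_div_cosh_mul_atTop (M : ℝ) {d : ℝ} (hd : 0 < d) :
    Tendsto (fun x => M / cosh (d * x)) atTop (𝓝 0) :=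
  tendsto_const_nhds.div_atTop (tendsto_cosh_atTop.comp (tendsto_id.const_mul_atTop hd))

theorem stmt_19_general (Dp Dn βp βn σ M : ℝ)
    (hDp : 0 < Dp) (hDn : 0 < Dn) (hβp : 0 < βp) (hβn : 0 < βn)
    (hσ : 0 < σ) (Δ : ℝ) (hΔ : σ ≤ Δ)
    (lam : ℤ → ℝ → ℂ) (ν : ℤ → ℝ → ℝ)
    (hre : ∀ m : ℤ, m ≠ 0 → ∀ τ ∈ Set.Icc (0:ℝ) 1,
      (lam m τ).re = -(Δ *
        (Real.tanh (Dp * (m : ℝ)) / (βp * (Dp * (m : ℝ)))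
          + Real.tanh (Dn * (m : ℝ)) / (βn * (Dn * (m : ℝ))))⁻¹) - ν m τ)
    (hν : ∀ m : ℤ, m ≠ 0 → ∀ τ ∈ Set.Icc (0:ℝ) 1,
      |ν m τ| ≤ M * |(m : ℝ)| / Real.cosh (min Dp Dn * |(m : ℝ)|)) :
    ∃ c : ℝ, 0 < c ∧ ∃ m₀ : ℕ, 1 ≤ m₀ ∧
      ∀ m : ℤ, (m₀ : ℤ) ≤ |m| → ∀ τ ∈ Set.Icc (0:ℝ) 1,
        (lam m τ).re ≤ -c * |(m : ℝ)| := by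
  set K := 1 / (βp * Dp) + 1 / (βn * Dn)
  have hK : 0 < K := by positivity
  have hc : 0 < σ / (2 * K) := by positivity
  obtain ⟨N, hN⟩ := eventually_atTop.1 <|
    (tendsto_div_cosh_mul_atTop M (lt_min hDp hDn)).eventually (ge_mem_nhds hc)
  refine ⟨σ / (2 * K), hc, max 1 ⌈N⌉₊, le_max_left _ _, fun m hm τ hτ => ?_⟩
  have hm_large : (max 1 ⌈N⌉₊ : ℝ) ≤ |(m : ℝ)| := by rw [← Int.cast_abs]; exact_mod_cast hm
  have hm0 : m ≠ 0 := by
    rintro rfl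
    norm_num at hm_large
  have hσΔ : σ * (|(m : ℝ)| / K) ≤ Δ * (|(m : ℝ)| / K) := by gcongr
  have hμ := mul_abs_div_le_dirichletNeumann hDp hDn hβp hβn (hσ.le.trans hΔ)
    (Int.cast_ne_zero.2 hm0)
  have hν_small : |ν m τ| ≤ σ / (2 * K) * |(m : ℝ)| := by
    refine (hν m hm0 τ hτ).trans ?_
    rw [mul_div_right_comm]
    exact mul_le_mul_of_nonneg_right
      (hN _ ((Nat.le_ceil N).trans (le_max_right (1 : ℝ) _) |>.trans hm_large)) (abs_nonneg _)
  have hhalf : σ / (2 * K) * |(m : ℝ)| = σ * (|(m : ℝ)| / K) / 2 := by field_simp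
  rw [hre m hm0 τ hτ]
  linarith [neg_le_abs (ν m τ)]

/-- uniform sectoriality Re λ_m ≤ -c|m| for large |m|, combining
the linear growth of the Dirichlet–Neumann part with the exponential decay of
the correction. -/
theorem stmt_19 (Dp Dn βp βn σ M : ℝ)
    (hDp : 0 < Dp) (hDn : 0 < Dn) (hβp : 0 < βp) (hβn : 0 < βn)
    (hσ : 0 < σ) (hM : 0 < M) (Δ : ℝ) (hΔ : σ ≤ Δ)
    (lam : ℤ → ℝ → ℂ) (ν : ℤ → ℝ → ℝ)
    (hre : ∀ m : ℤ, m ≠ 0 → ∀ τ ∈ Set.Icc (0:ℝ) 1,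
      (lam m τ).re = -(Δ *
        (Real.tanh (Dp * (m : ℝ)) / (βp * (Dp * (m : ℝ)))
          + Real.tanh (Dn * (m : ℝ)) / (βn * (Dn * (m : ℝ))))⁻¹) - ν m τ)
    (hν : ∀ m : ℤ, m ≠ 0 → ∀ τ ∈ Set.Icc (0:ℝ) 1,
      |ν m τ| ≤ M * |(m : ℝ)| / Real.cosh (min Dp Dn * |(m : ℝ)|)) :
    ∃ c : ℝ, 0 < c ∧ ∃ m₀ : ℕ, 1 ≤ m₀ ∧
      ∀ m : ℤ, (m₀ : ℤ) ≤ |m| → ∀ τ ∈ Set.Icc (0:ℝ) 1,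
        (lam m τ).re ≤ -c * |(m : ℝ)| :=
  stmt_19_general Dp Dn βp βn σ M hDp hDn hβp hβn hσ Δ hΔ lam ν hre hν
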